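/- arXiv:2105.00281 — 3 statements merged into one kernel-verified Lean document; each statement's English description precedes it below -/
import Mathlib

section
/- Let G be a simplicial group that is generated by degenerate elements in dimension 2 (e.g., a free simplicial group degenerate in dimensions ≥ 2). Then in dimension 1, the commutator subgroup [Ker d₀, Ker d₁] equals the image of the restriction of d₂ : G₂ → G₁ to the second Moore complex term NG₂ = Ker d₀ ∩ Ker d₁ (Brown–Loday lemma in low dimension). -/
/-!
Put `C = ⁅Ker d₀, Ker d₁⁆`. Every commutator `⁅a, b⁆` with `d₀ a = 1 = d₁ b` is the last face of
`⁅t₁ a, t₀ b⁻¹ * t₁ b⁆ ∈ NG₂`. Conversely, modulo `C` the last face `D₂ g` of any `g ∈ G₂` equals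
`s₀ (d₁ (D₀ g)) * (D₀ g)⁻¹ * D₁ g`: the right-hand side is multiplicative in `g` modulo `C`
because `(D₀ g)⁻¹ * D₁ g ∈ Ker d₀` and `s₀ (d₁ a) * a⁻¹ ∈ Ker d₁`, and both sides agree on the
degenerate generators. For `g ∈ NG₂` the right-hand side is `1`, so `D₂ g ∈ C`.
-/

open scoped commutatorElement

theorem QuotientGroup.mk_commute_of_mem_of_mem {G : Type*} [Group G] {A B : Subgroup G}
    [⁅A, B⁆.Normal] {a b : G} (ha : a ∈ A) (hb : b ∈ B) :
    Commute (a : G ⧸ ⁅A, B⁆) (b : G ⧸ ⁅A, B⁆) := by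
  rw [← commutatorElement_eq_one_iff_commute]
  exact (QuotientGroup.eq_one_iff _).mpr (Subgroup.commutator_mem_commutator ha hb)

namespace BrownLoday

variable {G₀ G₁ H : Type*} [Group G₀] [Group G₁] [Group H]

def lastFaceModCommutator (d₀ d₁ : G₁ →* G₀) (s₀ : G₀ →* G₁) (hd₁s₀ : ∀ a, d₁ (s₀ a) = a)
    (x y : H →* G₁) (hxy : ∀ g, d₀ (x g) = d₀ (y g)) : H →* G₁ ⧸ ⁅d₀.ker, d₁.ker⁆ where
  toFun g := QuotientGroup.mk' _ (s₀ (d₁ (x g)) * (x g)⁻¹ * y g)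
  map_one' := by simp
  map_mul' g h := by
    have hu : (x g)⁻¹ * y g ∈ d₀.ker := by simp [hxy g]
    have hw : s₀ (d₁ (x h)) * (x h)⁻¹ ∈ d₁.ker := by simp [hd₁s₀]
    set π := QuotientGroup.mk' ⁅d₀.ker, d₁.ker⁆
    have key : π ((x g)⁻¹ * y g) * π (s₀ (d₁ (x h)) * (x h)⁻¹) =
        π (s₀ (d₁ (x h)) * (x h)⁻¹) * π ((x g)⁻¹ * y g) :=
      (QuotientGroup.mk_commute_of_mem_of_mem hu hw).eq
    simp only [map_mul, map_inv, mul_inv_rev] at key ⊢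
    generalize π (x g) = A, π (y g) = B, π (s₀ (d₁ (x g))) = S,
      π (x h) = A', π (y h) = B', π (s₀ (d₁ (x h))) = S' at key ⊢
    calc S * S' * (A'⁻¹ * A⁻¹) * (B * B') = S * (S' * A'⁻¹ * (A⁻¹ * B)) * B' := by group
      _ = S * (A⁻¹ * B * (S' * A'⁻¹)) * B' := by rw [key]
      _ = S * A⁻¹ * B * (S' * A'⁻¹ * B') := by group

variable (d₀ d₁ : G₁ →* G₀) (s₀ : G₀ →* G₁) (D₀ D₁ D₂ : H →* G₁) (t₀ t₁ : G₁ →* H)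

theorem commutator_ker_le_map_moore (hD₁t₀ : ∀ a, D₁ (t₀ a) = a)
    (hD₂t₀ : ∀ a, D₂ (t₀ a) = s₀ (d₁ a)) (hD₀t₁ : ∀ a, D₀ (t₁ a) = s₀ (d₀ a))
    (hD₁t₁ : ∀ a, D₁ (t₁ a) = a) (hD₂t₁ : ∀ a, D₂ (t₁ a) = a) :
    ⁅d₀.ker, d₁.ker⁆ ≤ (D₀.ker ⊓ D₁.ker).map D₂ := by
  rw [Subgroup.commutator_le]
  intro a ha b hb
  rw [MonoidHom.mem_ker] at ha hb
  refine ⟨⁅t₁ a, t₀ b⁻¹ * t₁ b⁆, ⟨?_, ?_⟩, ?_⟩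
  · simp [map_commutatorElement, hD₀t₁, ha]
  · simp [map_commutatorElement, hD₁t₀, hD₁t₁]
  · simp [map_commutatorElement, hD₂t₀, hD₂t₁, hb]

theorem map_moore_le_commutator_ker (hd₁s₀ : ∀ a, d₁ (s₀ a) = a)
    (hD₀t₀ : ∀ a, D₀ (t₀ a) = a) (hD₁t₀ : ∀ a, D₁ (t₀ a) = a)
    (hD₂t₀ : ∀ a, D₂ (t₀ a) = s₀ (d₁ a)) (hD₀t₁ : ∀ a, D₀ (t₁ a) = s₀ (d₀ a))
    (hD₁t₁ : ∀ a, D₁ (t₁ a) = a) (hD₂t₁ : ∀ a, D₂ (t₁ a) = a)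
    (hgen : Subgroup.closure (Set.range t₀ ∪ Set.range t₁) = ⊤)
    (hface : ∀ g, d₀ (D₀ g) = d₀ (D₁ g)) :
    (D₀.ker ⊓ D₁.ker).map D₂ ≤ ⁅d₀.ker, d₁.ker⁆ := by
  have hlast :
      (QuotientGroup.mk' _).comp D₂ = lastFaceModCommutator d₀ d₁ s₀ hd₁s₀ D₀ D₁ hface := by
    refine MonoidHom.eq_of_eqOn_dense hgen ?_
    rintro _ (⟨a, rfl⟩ | ⟨a, rfl⟩) <;>
      simp [lastFaceModCommutator, hD₀t₀, hD₁t₀, hD₂t₀, hD₀t₁, hD₁t₁, hD₂t₁, hd₁s₀]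
  rintro _ ⟨g, ⟨hg₀ : D₀ g = 1, hg₁ : D₁ g = 1⟩, rfl⟩
  have hg := DFunLike.congr_fun hlast g
  simpa [lastFaceModCommutator, hg₀, hg₁] using hg

end BrownLoday

/-- The simplicial group is encoded by its 2-truncation: faces `d₀ d₁ : G₁ → G₀`,
`D₀ D₁ D₂ : G₂ → G₁` and degeneracies `s₀ : G₀ → G₁`, `t₀ t₁ : G₁ → G₂`. -/
theorem brown_loday_low_dimension
    {G₀ G₁ G₂ : Type*} [Group G₀] [Group G₁] [Group G₂]
    (d₀ d₁ : G₁ →* G₀) (s₀ : G₀ →* G₁)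
    (D₀ D₁ D₂ : G₂ →* G₁) (t₀ t₁ : G₁ →* G₂)
    (hd₀s₀ : ∀ x, d₀ (s₀ x) = x) (hd₁s₀ : ∀ x, d₁ (s₀ x) = x)
    (hD₀t₀ : ∀ x, D₀ (t₀ x) = x) (hD₁t₀ : ∀ x, D₁ (t₀ x) = x)
    (hD₂t₀ : ∀ x, D₂ (t₀ x) = s₀ (d₁ x))
    (hD₀t₁ : ∀ x, D₀ (t₁ x) = s₀ (d₀ x))
    (hD₁t₁ : ∀ x, D₁ (t₁ x) = x) (hD₂t₁ : ∀ x, D₂ (t₁ x) = x)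
    (hgen : Subgroup.closure (Set.range t₀ ∪ Set.range t₁) = (⊤ : Subgroup G₂)) :
    ⁅d₀.ker, d₁.ker⁆ = Subgroup.map D₂ (D₀.ker ⊓ D₁.ker) := by
  have hface : ∀ g, d₀ (D₀ g) = d₀ (D₁ g) := by
    refine DFunLike.congr_fun
      (MonoidHom.eq_of_eqOn_dense (f := d₀.comp D₀) (g := d₀.comp D₁) hgen ?_)
    rintro _ (⟨a, rfl⟩ | ⟨a, rfl⟩) <;> simp [hD₀t₀, hD₁t₀, hD₀t₁, hD₁t₁, hd₀s₀]
  exact le_antisymm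
    (BrownLoday.commutator_ker_le_map_moore d₀ d₁ s₀ D₀ D₁ D₂ t₀ t₁ hD₁t₀ hD₂t₀ hD₀t₁ hD₁t₁ hD₂t₁)
    (BrownLoday.map_moore_le_commutator_ker d₀ d₁ s₀ D₀ D₁ D₂ t₀ t₁ hd₁s₀ hD₀t₀ hD₁t₀ hD₂t₀
      hD₀t₁ hD₁t₁ hD₂t₁ hgen hface)
end

section
/- Let G be a simplicial group. Every element x ∈ Ker d₁ ⊆ G₁ can be written as x = y · s₀ d₁(y⁻¹) for some y ∈ Ker d₀. Consequently, the Peiffer subgroup of the pre-crossed module (Ker d₀, G₀, d₁) (with G₀ acting on Ker d₀ by a^u = s₀(u)⁻¹ a s₀(u)) equals the commutator subgroup [Ker d₀, Ker d₁]. -/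
/-!
Subtracting the degenerate part of `x` along `d₀`, i.e. passing to `y = x · s₀(d₀ x)⁻¹ ∈ Ker d₀`,
gives the decomposition `x = y · s₀ d₁(y⁻¹)` of `x ∈ Ker d₁`. In any group the Peiffer element
`u⁻¹ a u (w⁻¹ a w)⁻¹` is the conjugate by `u` of the commutator `[a, u w⁻¹]`, and with
`w = s₀ d₁ u` the element `u w⁻¹` lies in `Ker d₁`; so Peiffer elements lie in
`[Ker d₀, Ker d₁]`. Conversely, writing `x ∈ Ker d₁` as `u⁻¹ · s₀ d₁ u` with `u ∈ Ker d₀`,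
every commutator `[a, x]` is the inverse of a Peiffer element.
-/

open scoped commutatorElement

section GroupIdentities

variable {G : Type*} [Group G]

theorem peiffer_eq_conj_commutatorElement (a u w : G) :
    u⁻¹ * a * u * (w⁻¹ * a * w)⁻¹ = u⁻¹ * ⁅a, u * w⁻¹⁆ * u := by
  simp only [commutatorElement_def]
  group

theorem commutatorElement_inv_mul_eq_inv_peiffer (a u w : G) :
    ⁅a, u⁻¹ * w⁆ = (u⁻¹ * (w * a * w⁻¹) * u * (w⁻¹ * (w * a * w⁻¹) * w)⁻¹)⁻¹ := by
  simp only [commutatorElement_def]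
  group

end GroupIdentities

namespace MonoidHom

variable {G₀ G₁ : Type*} [Group G₀] [Group G₁]

theorem mul_inv_section_mem_ker (d : G₁ →* G₀) {s : G₀ → G₁} (hds : ∀ x, d (s x) = x)
    (x : G₁) : x * (s (d x))⁻¹ ∈ d.ker := by
  simp [mem_ker, hds]

theorem exists_mem_ker_eq_mul_section (d₀ d₁ : G₁ →* G₀) {s₀ : G₀ → G₁}
    (hd₀s₀ : ∀ x, d₀ (s₀ x) = x) (hd₁s₀ : ∀ x, d₁ (s₀ x) = x) {x : G₁} (hx : x ∈ d₁.ker) :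
    ∃ y ∈ d₀.ker, x = y * s₀ (d₁ y⁻¹) := by
  refine ⟨x * (s₀ (d₀ x))⁻¹, d₀.mul_inv_section_mem_ker hd₀s₀ x, ?_⟩
  rw [mem_ker] at hx
  simp [hd₁s₀, hx]

end MonoidHom

section PeifferSubgroup

variable {G₀ G₁ : Type*} [Group G₀] [Group G₁]

/-- The Peiffer commutators `⟨u, a⟩ = u⁻¹ a u (a^{d₁ u})⁻¹` of the pre-crossed module
`d₁ : Ker d₀ → G₀`, where `a^g = s₀(g)⁻¹ a s₀(g)`. -/
def peifferCommutators (d₀ d₁ : G₁ →* G₀) (s₀ : G₀ → G₁) : Set G₁ :=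
  {z | ∃ u a : G₁, u ∈ d₀.ker ∧ a ∈ d₀.ker ∧
    z = u⁻¹ * a * u * ((s₀ (d₁ u))⁻¹ * a * s₀ (d₁ u))⁻¹}

theorem closure_peifferCommutators_le_commutator (d₀ d₁ : G₁ →* G₀) {s₀ : G₀ → G₁}
    (hd₁s₀ : ∀ x, d₁ (s₀ x) = x) :
    Subgroup.closure (peifferCommutators d₀ d₁ s₀) ≤ ⁅d₀.ker, d₁.ker⁆ := by
  rw [Subgroup.closure_le]
  rintro _ ⟨u, a, -, ha, rfl⟩
  rw [peiffer_eq_conj_commutatorElement]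
  exact Subgroup.Normal.conj_mem' inferInstance _
    (Subgroup.commutator_mem_commutator ha (d₁.mul_inv_section_mem_ker hd₁s₀ u)) u

theorem commutator_le_closure_peifferCommutators (d₀ d₁ : G₁ →* G₀) {s₀ : G₀ → G₁}
    (hd₀s₀ : ∀ x, d₀ (s₀ x) = x) (hd₁s₀ : ∀ x, d₁ (s₀ x) = x) :
    ⁅d₀.ker, d₁.ker⁆ ≤ Subgroup.closure (peifferCommutators d₀ d₁ s₀) := by
  rw [Subgroup.commutator_le]
  intro a ha x hx
  obtain ⟨y, hy, rfl⟩ := d₀.exists_mem_ker_eq_mul_section d₁ hd₀s₀ hd₁s₀ hx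
  set w := s₀ (d₁ y⁻¹)
  have hconj : w * a * w⁻¹ ∈ d₀.ker := d₀.normal_ker.conj_mem a ha w
  rw [← inv_inv y, commutatorElement_inv_mul_eq_inv_peiffer]
  exact inv_mem (Subgroup.subset_closure ⟨y⁻¹, _, inv_mem hy, hconj, rfl⟩)

theorem closure_peifferCommutators_eq_commutator (d₀ d₁ : G₁ →* G₀) {s₀ : G₀ → G₁}
    (hd₀s₀ : ∀ x, d₀ (s₀ x) = x) (hd₁s₀ : ∀ x, d₁ (s₀ x) = x) :
    Subgroup.closure (peifferCommutators d₀ d₁ s₀) = ⁅d₀.ker, d₁.ker⁆ :=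
  le_antisymm (closure_peifferCommutators_le_commutator d₀ d₁ hd₁s₀)
    (commutator_le_closure_peifferCommutators d₀ d₁ hd₀s₀ hd₁s₀)

end PeifferSubgroup

/-- For a simplicial group (encoded in low dimension by `d₀ d₁ : G₁ → G₀`,
`s₀ : G₀ → G₁` with `d₀ ∘ s₀ = d₁ ∘ s₀ = id`): every `x ∈ Ker d₁` can be written as
`x = y * s₀ (d₁ y⁻¹)` with `y ∈ Ker d₀`; consequently the Peiffer subgroup of the
pre-crossed module `(Ker d₀, G₀, d₁)` (with action `a^u = s₀(u)⁻¹ a s₀(u)`) equals the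
commutator subgroup `[Ker d₀, Ker d₁]`. -/
theorem moore_decomposition_and_peiffer_eq_commutator
    {G₀ G₁ : Type*} [Group G₀] [Group G₁]
    (d₀ d₁ : G₁ →* G₀) (s₀ : G₀ →* G₁)
    (hd₀s₀ : ∀ x, d₀ (s₀ x) = x) (hd₁s₀ : ∀ x, d₁ (s₀ x) = x)
    (P : Subgroup G₁)
    (hP : P = Subgroup.closure
      {z : G₁ | ∃ u a : G₁, u ∈ d₀.ker ∧ a ∈ d₀.ker ∧
        z = u⁻¹ * a * u * ((s₀ (d₁ u))⁻¹ * a * s₀ (d₁ u))⁻¹}) :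
    (∀ x ∈ d₁.ker, ∃ y ∈ d₀.ker, x = y * s₀ (d₁ y⁻¹)) ∧
    P = ⁅d₀.ker, d₁.ker⁆ :=
  ⟨fun _ hx => d₀.exists_mem_ker_eq_mul_section d₁ hd₀s₀ hd₁s₀ hx,
    hP.trans (closure_peifferCommutators_eq_commutator d₀ d₁ hd₀s₀ hd₁s₀)⟩
end

section
/- Let f : 𝔤 → 𝔥 be a surjective homomorphism of finite-dimensional nilpotent Lie algebras over a field k of characteristic zero, and let h₁, …, h_e generate 𝔥 (as a Lie algebra) with e at least the minimal number of generators of 𝔤. Then there exist generators g₁, …, g_e of 𝔤 with f(gᵢ) = hᵢ for all i (Gaschütz lemma for nilpotent Lie algebras). -/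
/-!
In a nilpotent Lie algebra `L` a subset generates `L` as soon as it spans `L` modulo `[L, L]`:
if `K + [L, L] = L` for a subalgebra `K`, then `[L, L] = [K + [L, L], K + [L, L]]` lies in
`K + [L, [L, L]]`, and in the same way `K + CⁿL = L` for every term `CⁿL` of the lower central
series, which reaches `0`.
This reduces the theorem to linear algebra in `V = L₁ / [L₁, L₁]`, where lifts of the `hᵢ`
together with the image `W` of `ker f` span `V`. While the lifts do not span `V`, they are
linearly dependent because `dim V ≤ e`; adding to a redundant one a vector of `W` outside their
span strictly enlarges the span, so finitely many such corrections make the lifts span `V`.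
-/

open Module Set

namespace Submodule

variable {k V ι : Type*} [DivisionRing k] [AddCommGroup V] [Module k V] [Fintype ι]

theorem exists_span_range_lt_span_range_add [FiniteDimensional k V] (W : Submodule k V)
    (v : ι → V) (hι : finrank k V ≤ Fintype.card ι) (hvW : span k (range v) ⊔ W = ⊤)
    (hv : span k (range v) ≠ ⊤) :
    ∃ w : ι → V, (∀ i, w i ∈ W) ∧ span k (range v) < span k (range (v + w)) := by
  classical
  obtain ⟨u, huW, hu⟩ : ∃ u ∈ W, u ∉ span k (range v) :=
    SetLike.not_le_iff_exists.mp fun hle => hv (by rwa [sup_eq_left.2 hle] at hvW)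
  obtain ⟨i, hi⟩ : ∃ i, v i ∈ span k (v '' (univ \ {i})) := by
    by_contra! hli
    refine hv (eq_top_of_finrank_eq ((finrank_le _).antisymm ?_))
    rwa [finrank_span_eq_card (linearIndependent_iff_notMem_span.2 hli)]
  have hvu : v i + u ∉ span k (range v) := fun h =>
    hu (by simpa using sub_mem h (subset_span ⟨i, rfl⟩))
  refine ⟨Pi.single i u, fun j => ?_, (lt_sup_iff_notMem.2 hvu).trans_le (sup_le ?_ ?_)⟩
  · rcases eq_or_ne j i with rfl | hj
    · simpa using huW
    · simp [hj]
  · rw [span_le]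
    rintro _ ⟨j, rfl⟩
    rcases eq_or_ne j i with rfl | hj
    · refine span_mono ?_ hi
      rintro _ ⟨l, hl, rfl⟩
      exact ⟨l, by simp [show l ≠ j by simpa using hl]⟩
    · exact subset_span ⟨j, by simp [hj]⟩
  · exact (span_singleton_le_iff_mem _ _).2 (subset_span ⟨i, by simp⟩)

theorem exists_span_range_add_eq_top [FiniteDimensional k V] (W : Submodule k V) (v : ι → V)
    (hι : finrank k V ≤ Fintype.card ι) (hvW : span k (range v) ⊔ W = ⊤) :
    ∃ w : ι → V, (∀ i, w i ∈ W) ∧ span k (range (v + w)) = ⊤ := by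
  induction hn : finrank k V - finrank k (span k (range v)) using Nat.strong_induction_on
    generalizing v with
  | _ n ih =>
  by_cases hv : span k (range v) = ⊤
  · exact ⟨0, fun _ => W.zero_mem, by simpa using hv⟩
  obtain ⟨w, hwW, hlt⟩ := exists_span_range_lt_span_range_add W v hι hvW hv
  have hrank := finrank_lt_finrank_of_lt hlt
  have hle := finrank_le (span k (range (v + w)))
  obtain ⟨w', hw'W, hw'⟩ := ih _ (by omega) (v + w)
    (eq_top_iff.2 (hvW ▸ sup_le_sup_right hlt.le W)) rfl
  exact ⟨w + w', fun i => W.add_mem (hwW i) (hw'W i), by rwa [← add_assoc]⟩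

theorem exists_span_range_add_sup_eq_top (P W : Submodule k V) [FiniteDimensional k (V ⧸ P)]
    (v : ι → V) (hι : finrank k (V ⧸ P) ≤ Fintype.card ι)
    (hvW : span k (range v) ⊔ W ⊔ P = ⊤) :
    ∃ w : ι → V, (∀ i, w i ∈ W) ∧ span k (range (v + w)) ⊔ P = ⊤ := by
  have hvW' : span k (range (P.mkQ ∘ v)) ⊔ W.map P.mkQ = ⊤ := by
    rwa [range_comp, ← map_span, ← map_sup, map_mkQ_eq_top, sup_comm]
  obtain ⟨w, hwW, hw⟩ := exists_span_range_add_eq_top _ _ hι hvW'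
  choose z hzW hz using fun i => mem_map.1 (hwW i)
  refine ⟨z, hzW, ?_⟩
  rwa [sup_comm, ← map_mkQ_eq_top, map_span, ← range_comp,
    show P.mkQ ∘ (v + z) = P.mkQ ∘ v + w from
      funext fun i => by simp only [Function.comp_apply, Pi.add_apply, map_add, hz]]

end Submodule

namespace LieSubalgebra

variable {k L : Type*} [CommRing k] [LieRing L] [LieAlgebra k L]

open LieModule Submodule

theorem lie_mem_sup_lowerCentralSeries (K : LieSubalgebra k L) {n : ℕ}
    (hK : K.toSubmodule ⊔ lowerCentralSeries k L L (n + 1) = ⊤) (x y : L) :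
    ⁅x, y⁆ ∈ K.toSubmodule ⊔ lowerCentralSeries k L L (n + 2) := by
  have hC {a b : L} (hb : b ∈ lowerCentralSeries k L L (n + 1)) :
      ⁅a, b⁆ ∈ lowerCentralSeries k L L (n + 2) := by
    rw [lowerCentralSeries_succ]
    exact LieSubmodule.lie_mem_lie (LieSubmodule.mem_top a) hb
  obtain ⟨a, ha, b, hb, rfl⟩ := mem_sup.1 (hK.ge (mem_top (x := x)))
  obtain ⟨c, hc, d, hd, rfl⟩ := mem_sup.1 (hK.ge (mem_top (x := y)))
  have : ⁅a + b, c + d⁆ = ⁅a, c⁆ + (⁅a + b, d⁆ - ⁅c, b⁆) := by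
    rw [← lie_skew c b]; simp only [add_lie, lie_add]; abel
  rw [this]
  exact add_mem (mem_sup_left (K.lie_mem ha hc))
    (mem_sup_right (sub_mem (hC hd) (hC hb)))

theorem sup_lowerCentralSeries_eq_top (K : LieSubalgebra k L)
    (hK : K.toSubmodule ⊔ lowerCentralSeries k L L 1 = ⊤) (n : ℕ) :
    K.toSubmodule ⊔ lowerCentralSeries k L L (n + 1) = ⊤ := by
  induction n with
  | zero => exact hK
  | succ n ih =>
    refine eq_top_iff.2 (ih ▸ sup_le le_sup_left ?_)
    rw [lowerCentralSeries_succ, LieIdeal.toLieSubalgebra_toSubmodule,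
      LieSubmodule.lieIdeal_oper_eq_linear_span', span_le]
    rintro _ ⟨x, -, y, -, rfl⟩
    exact K.lie_mem_sup_lowerCentralSeries ih x y

theorem eq_top_of_sup_commutator_eq_top [LieRing.IsNilpotent L] (K : LieSubalgebra k L)
    (hK : K.toSubmodule ⊔ ((⁅(⊤ : LieIdeal k L), ⊤⁆ : LieIdeal k L) : Submodule k L) = ⊤) :
    K = ⊤ := by
  obtain ⟨N, hN⟩ := IsNilpotent.nilpotent k L L
  have hN' : lowerCentralSeries k L L (N + 1) = ⊥ :=
    _root_.eq_bot_iff.2 (hN ▸ antitone_lowerCentralSeries k L L N.le_succ)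
  have hKN := K.sup_lowerCentralSeries_eq_top hK N
  rwa [hN', LieIdeal.toLieSubalgebra_toSubmodule, LieSubmodule.bot_toSubmodule, sup_bot_eq,
    toSubmodule_eq_top] at hKN

theorem span_sup_commutator_eq_top_of_lieSpan_eq_top {s : Set L} (hs : lieSpan k L s = ⊤) :
    span k s ⊔ ((⁅(⊤ : LieIdeal k L), ⊤⁆ : LieIdeal k L) : Submodule k L) = ⊤ := by
  let K : LieSubalgebra k L :=
    { span k s ⊔ ((⁅(⊤ : LieIdeal k L), ⊤⁆ : LieIdeal k L) : Submodule k L) with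
      lie_mem' := fun _ _ => mem_sup_right (LieSubmodule.lie_mem_lie
        (LieSubmodule.mem_top _) (LieSubmodule.mem_top _)) }
  have hK : lieSpan k L s ≤ K := lieSpan_le.2 fun x hx => mem_sup_left (subset_span hx)
  exact K.toSubmodule_eq_top.2 (top_le_iff.1 (hs ▸ hK))

theorem lieSpan_eq_top_of_span_sup_commutator_eq_top [LieRing.IsNilpotent L] {s : Set L}
    (hs : span k s ⊔ ((⁅(⊤ : LieIdeal k L), ⊤⁆ : LieIdeal k L) : Submodule k L) = ⊤) :
    lieSpan k L s = ⊤ :=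
  eq_top_of_sup_commutator_eq_top _ (eq_top_iff.2 (hs ▸ sup_le_sup_right
    (submodule_span_le_lieSpan (R := k) (L := L)) _))

end LieSubalgebra

theorem LieHom.map_commutator_of_surjective {k L L' : Type*} [CommRing k] [LieRing L]
    [LieAlgebra k L] [LieRing L'] [LieAlgebra k L'] {f : L →ₗ⁅k⁆ L'}
    (hf : Function.Surjective f) :
    (((⁅(⊤ : LieIdeal k L), ⊤⁆ : LieIdeal k L) : Submodule k L).map (f : L →ₗ[k] L')) =
      ((⁅(⊤ : LieIdeal k L'), ⊤⁆ : LieIdeal k L') : Submodule k L') := by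
  simpa [LieIdeal.coe_map_of_surjective hf] using
    congrArg LieSubmodule.toSubmodule (LieIdeal.lowerCentralSeries_map_eq 1 hf)

open Submodule LieSubalgebra

theorem gaschutz_nilpotent_lie_general
    {k : Type} [Field k]
    {L₁ L₂ : Type} [LieRing L₁] [LieAlgebra k L₁] [LieRing L₂] [LieAlgebra k L₂]
    [FiniteDimensional k L₁]
    [LieRing.IsNilpotent L₁]
    (f : L₁ →ₗ⁅k⁆ L₂) (hf : Function.Surjective f)
    {e : ℕ} (h : Fin e → L₂)
    (hgen : LieSubalgebra.lieSpan k L₂ (Set.range h) = ⊤)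
    (he : Module.finrank k
      (L₁ ⧸ ((⁅(⊤ : LieIdeal k L₁), (⊤ : LieIdeal k L₁)⁆ : LieIdeal k L₁) : Submodule k L₁))
      ≤ e) :
    ∃ g : Fin e → L₁, (∀ i, f (g i) = h i) ∧
      LieSubalgebra.lieSpan k L₁ (Set.range g) = ⊤ := by
  choose g₀ hg₀ using fun i => hf (h i)
  have hspan : span k (range g₀) ⊔ LinearMap.ker (f : L₁ →ₗ[k] L₂) ⊔
      ((⁅(⊤ : LieIdeal k L₁), ⊤⁆ : LieIdeal k L₁) : Submodule k L₁) = ⊤ := by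
    rw [sup_right_comm, ← comap_map_eq, Submodule.map_sup, map_span, ← range_comp,
      show (f : L₁ →ₗ[k] L₂) ∘ g₀ = h from funext hg₀, f.map_commutator_of_surjective hf,
      span_sup_commutator_eq_top_of_lieSpan_eq_top hgen, comap_top]
  obtain ⟨z, hz, hgz⟩ := exists_span_range_add_sup_eq_top _ _ g₀ (by simpa using he) hspan
  exact ⟨g₀ + z, fun i => by simpa [hg₀] using hz i,
    lieSpan_eq_top_of_span_sup_commutator_eq_top hgz⟩

/-- Gaschütz lemma for nilpotent Lie algebras: let `f : 𝔤 → 𝔥` be a surjective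
homomorphism of finite-dimensional nilpotent Lie algebras over a field `k` of
characteristic zero, and let `h₁, …, h_e` generate `𝔥` as a Lie algebra, where `e` is
at least the minimal number of generators of `𝔤` (the dimension of the abelianization
`𝔤/[𝔤,𝔤]`).  Then there exist generators `g₁, …, g_e` of `𝔤` with `f gᵢ = hᵢ`. -/
theorem gaschutz_nilpotent_lie
    {k : Type} [Field k] [CharZero k]
    {L₁ L₂ : Type} [LieRing L₁] [LieAlgebra k L₁] [LieRing L₂] [LieAlgebra k L₂]
    [FiniteDimensional k L₁] [FiniteDimensional k L₂]
    [LieRing.IsNilpotent L₁] [LieRing.IsNilpotent L₂]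
    (f : L₁ →ₗ⁅k⁆ L₂) (hf : Function.Surjective f)
    {e : ℕ} (h : Fin e → L₂)
    (hgen : LieSubalgebra.lieSpan k L₂ (Set.range h) = ⊤)
    (he : Module.finrank k
      (L₁ ⧸ ((⁅(⊤ : LieIdeal k L₁), (⊤ : LieIdeal k L₁)⁆ : LieIdeal k L₁) : Submodule k L₁))
      ≤ e) :
    ∃ g : Fin e → L₁, (∀ i, f (g i) = h i) ∧
      LieSubalgebra.lieSpan k L₁ (Set.range g) = ⊤ :=
  gaschutz_nilpotent_lie_general f hf h hgen he
end
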